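/- Let & be a left continuous t-norm on [0,1] and (X,r), (Y,s) two [0,1]-categories. For [0,1]-functors f,g : (X,r)→(Y,s) define d(f,g) = sup{q ∈ [0,1] : q ∧ r(x,y) ≤ s(f(x),g(y)) for all x,y ∈ X}. If & satisfies (p&q) ∧ u = ((p∧u)&q) ∨ (p&(q∧u)) for all p,q,u, then d is a [0,1]-categorical structure on the set of [0,1]-functors, i.e., d(f,f) = 1 and d(g,h) & d(f,g) ≤ d(f,h). -/

import Mathlib

instance : Fact ((0:ℝ) ≤ 1) := ⟨zero_le_one⟩

open unitInterval

/-- A \`[0,1]\`-category structure on \`X\`. -/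
def IsRCat {X : Type*} (op : I → I → I) (r : X → X → I) : Prop :=
  (∀ x, r x x = 1) ∧ ∀ x y z, op (r y z) (r x y) ≤ r x z

/-- A \`[0,1]\`-functor. -/
def IsRFunctor {X Y : Type*} (r : X → X → I) (s : Y → Y → I) (f : X → Y) : Prop :=
  ∀ x y, r x y ≤ s (f x) (f y)

/-- `d(f, g)` is the supremum of this set. -/
def distCandidates {X Y : Type*} (r : X → X → I) (s : Y → Y → I) (f g : X → Y) : Set I :=
  {q | ∀ x y, q ⊓ r x y ≤ s (f x) (g y)}

section distCandidates

variable {X Y : Type*} {r : X → X → I} {s : Y → Y → I}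

theorem one_mem_distCandidates {f : X → Y} (hf : IsRFunctor r s f) :
    1 ∈ distCandidates r s f f :=
  fun x y => inf_le_right.trans (hf x y)

theorem le_of_mem_distCandidates (hr : ∀ x, r x x = 1) {f g : X → Y} {q : I}
    (hq : q ∈ distCandidates r s f g) (x : X) : q ≤ s (f x) (g x) :=
  (le_inf le_rfl (hr x ▸ le_one')).trans (hq x x)

/-- The distributivity law splits `(p & q) ∧ r(x, y)` into two terms, and each one factors
through the transitivity of `s`, along `f x → g x → h y` and `f x → g y → h y` respectively. -/
theorem op_mem_distCandidates {op : I → I → I}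
    (hmono : ∀ x y z w, x ≤ y → z ≤ w → op x z ≤ op y w)
    (hdist : ∀ p q u, op p q ⊓ u = op (p ⊓ u) q ⊔ op p (q ⊓ u))
    (hr : IsRCat op r) (hs : IsRCat op s) {f g h : X → Y} {p q : I}
    (hp : p ∈ distCandidates r s g h) (hq : q ∈ distCandidates r s f g) :
    op p q ∈ distCandidates r s f h := by
  intro x y
  rw [hdist]
  exact sup_le
    ((hmono _ _ _ _ (hp x y) (le_of_mem_distCandidates hr.1 hq x)).trans (hs.2 _ _ _))
    ((hmono _ _ _ _ (le_of_mem_distCandidates hr.1 hp y) (hq x y)).trans (hs.2 _ _ _))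

end distCandidates

theorem op_sSup_sSup_le {α : Type*} [CompleteLattice α] {op : α → α → α}
    (hcomm : ∀ x y, op x y = op y x)
    (hlc : ∀ (x : α) (S : Set α), op x (sSup S) = sSup (op x '' S))
    {A B : Set α} {c : α} (h : ∀ p ∈ A, ∀ q ∈ B, op p q ≤ c) :
    op (sSup A) (sSup B) ≤ c := by
  rw [hlc, sSup_image]
  refine iSup₂_le fun q hq => ?_
  rw [hcomm, hlc, sSup_image]
  exact iSup₂_le fun p hp => hcomm p q ▸ h p hp q hq

theorem stmt19_general (op : I → I → I)
    (hcomm : ∀ x y, op x y = op y x)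
    (hmono : ∀ x y z w, x ≤ y → z ≤ w → op x z ≤ op y w)
    (hlc : ∀ (x : I) (S : Set I), op x (sSup S) = sSup (op x '' S))
    (hdist : ∀ p q u, op p q ⊓ u = op (p ⊓ u) q ⊔ op p (q ⊓ u))
    {X Y : Type*} (r : X → X → I) (s : Y → Y → I)
    (hr : IsRCat op r) (hs : IsRCat op s) :
    (∀ f : X → Y, IsRFunctor r s f →
      sSup {q : I | ∀ x y, q ⊓ r x y ≤ s (f x) (f y)} = 1) ∧
    (∀ f g h : X → Y, IsRFunctor r s f → IsRFunctor r s g → IsRFunctor r s h →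
      op (sSup {q : I | ∀ x y, q ⊓ r x y ≤ s (g x) (h y)})
         (sSup {q : I | ∀ x y, q ⊓ r x y ≤ s (f x) (g y)})
        ≤ sSup {q : I | ∀ x y, q ⊓ r x y ≤ s (f x) (h y)}) := by
  refine ⟨fun f hf => top_unique (le_sSup (one_mem_distCandidates hf)), ?_⟩
  intro f g h _ _ _
  exact op_sSup_sSup_le hcomm hlc fun p hp q hq =>
    le_sSup (op_mem_distCandidates hmono hdist hr hs hp hq)

theorem stmt19 (op : I → I → I)
    (hcomm : ∀ x y, op x y = op y x)
    (hassoc : ∀ x y z, op (op x y) z = op x (op y z))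
    (hmono : ∀ x y z w, x ≤ y → z ≤ w → op x z ≤ op y w)
    (hone : ∀ x, op 1 x = x)
    (hlc : ∀ (x : I) (S : Set I), op x (sSup S) = sSup (op x '' S))
    (hdist : ∀ p q u, op p q ⊓ u = op (p ⊓ u) q ⊔ op p (q ⊓ u))
    {X Y : Type*} (r : X → X → I) (s : Y → Y → I)
    (hr : IsRCat op r) (hs : IsRCat op s) :
    (∀ f : X → Y, IsRFunctor r s f →
      sSup {q : I | ∀ x y, q ⊓ r x y ≤ s (f x) (f y)} = 1) ∧
    (∀ f g h : X → Y, IsRFunctor r s f → IsRFunctor r s g → IsRFunctor r s h →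
      op (sSup {q : I | ∀ x y, q ⊓ r x y ≤ s (g x) (h y)})
         (sSup {q : I | ∀ x y, q ⊓ r x y ≤ s (f x) (g y)})
        ≤ sSup {q : I | ∀ x y, q ⊓ r x y ≤ s (f x) (h y)}) :=
  stmt19_general op hcomm hmono hlc hdist r s hr hs
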